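/- arXiv:1210.8113 — 3 statements merged into one kernel-verified Lean document; each statement's English description precedes it below -/
import Mathlib

section
/- A finite simple graph is chordal if and only if it can be reduced to the empty graph by repeatedly deleting simplicial vertices; equivalently, it admits a perfect elimination scheme. -/
open SimpleGraph

/-- A finite-style graph: a subgraph of the complete graph on `ℕ`,
i.e. a graph together with its vertex set `verts ⊆ ℕ`. -/
abbrev FGraph := SimpleGraph.Subgraph (⊤ : SimpleGraph ℕ)

/-- The complete graph on the vertex set `s`. -/
def cliqueGraph (s : Finset ℕ) : FGraph where
  verts := ↑s
  Adj u v := u ∈ s ∧ v ∈ s ∧ u ≠ v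
  adj_sub h := h.2.2
  edge_vert h := h.1
  symm := ⟨fun u v h => ⟨h.2.1, h.1, h.2.2.symm⟩⟩

/-- Add a new vertex `v` to `G`, joined to the vertices of `s` (which are in `G`). -/
def addVertex (G : FGraph) (v : ℕ) (s : Finset ℕ) : FGraph where
  verts := insert v G.verts
  Adj x y := G.Adj x y ∨ (x = v ∧ y ≠ v ∧ y ∈ s ∧ y ∈ G.verts)
    ∨ (y = v ∧ x ≠ v ∧ x ∈ s ∧ x ∈ G.verts)
  adj_sub h := by
    rcases h with h | h | h
    · exact G.adj_sub h
    · exact fun e => h.2.1 (by rw [← e, h.1])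
    · exact fun e => h.2.1 (by rw [e, h.1])
  edge_vert h := by
    rcases h with h | h | h
    · exact Set.mem_insert_of_mem _ (G.edge_vert h)
    · exact h.1 ▸ Set.mem_insert _ _
    · exact Set.mem_insert_of_mem _ h.2.2.2
  symm := ⟨fun x y h => by
    rcases h with h | h | h
    · exact Or.inl (G.adj_symm h)
    · exact Or.inr (Or.inr h)
    · exact Or.inr (Or.inl h)⟩

/-- `s` is a clique (of pairwise adjacent vertices) in `G`. -/
def IsCliqueIn (G : FGraph) (s : Finset ℕ) : Prop :=
  ↑s ⊆ G.verts ∧ ∀ u ∈ s, ∀ v ∈ s, u ≠ v → G.Adj u v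

/-- `k`-trees: start from a `k`-clique and repeatedly add a vertex joined to an
existing `k`-clique. -/
inductive IsKTree (k : ℕ) : FGraph → Prop
  | base (s : Finset ℕ) (hs : s.card = k) : IsKTree k (cliqueGraph s)
  | grow (G : FGraph) (hG : IsKTree k G) (s : Finset ℕ) (hs : s.card = k)
      (hclique : IsCliqueIn G s) (v : ℕ) (hv : v ∉ G.verts) :
      IsKTree k (addVertex G v s)

/-- A partial `k`-tree is a subgraph of a `k`-tree. -/
def IsPartialKTree (k : ℕ) (G : FGraph) : Prop := ∃ H : FGraph, IsKTree k H ∧ G ≤ H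

/-- Add the single edge `uv` (and its endpoints) to `G`. -/
def addEdge (G : FGraph) (u v : ℕ) : FGraph where
  verts := insert u (insert v G.verts)
  Adj x y := G.Adj x y ∨ (x = u ∧ y = v ∧ u ≠ v) ∨ (x = v ∧ y = u ∧ u ≠ v)
  adj_sub h := by
    rcases h with h | h | h
    · exact G.adj_sub h
    · exact fun e => h.2.2 (by rw [← h.1, ← h.2.1, e])
    · exact fun e => h.2.2 (by rw [← h.1, ← h.2.1, e])
  edge_vert h := by
    rcases h with h | h | h
    · exact Set.mem_insert_of_mem _ (Set.mem_insert_of_mem _ (G.edge_vert h))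
    · exact h.1 ▸ Set.mem_insert _ _
    · exact h.1 ▸ Set.mem_insert_of_mem _ (Set.mem_insert _ _)
  symm := ⟨fun x y h => by
    rcases h with h | h | h
    · exact Or.inl (G.adj_symm h)
    · exact Or.inr (Or.inr ⟨h.2.1, h.1, h.2.2⟩)
    · exact Or.inr (Or.inl ⟨h.2.1, h.1, h.2.2⟩)⟩

/-- `G` is a minor of `H`: there are pairwise disjoint nonempty connected branch sets
in `H`, one for each vertex of `G`, with an `H`-edge between the branch sets of any
two `G`-adjacent vertices. -/
def IsMinor (G H : FGraph) : Prop :=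
  ∃ β : ℕ → Finset ℕ,
    (∀ u ∈ G.verts, (β u).Nonempty ∧ ↑(β u) ⊆ H.verts ∧ (H.induce ↑(β u)).coe.Connected) ∧
    (∀ u ∈ G.verts, ∀ v ∈ G.verts, u ≠ v → Disjoint (β u) (β v)) ∧
    (∀ u v, G.Adj u v → ∃ x ∈ β u, ∃ y ∈ β v, H.Adj x y)

/-- The complete graph `K₅`. -/
def K5g : FGraph := cliqueGraph {0, 1, 2, 3, 4}

/-- The complete bipartite graph `K₃,₃` with parts `{0,1,2}` and `{3,4,5}`. -/
def K33g : FGraph where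
  verts := {n : ℕ | n < 6}
  Adj u v := (u < 3 ∧ 3 ≤ v ∧ v < 6) ∨ (v < 3 ∧ 3 ≤ u ∧ u < 6)
  adj_sub := fun {u v} h => by rcases h with h | h <;> exact show u ≠ v by omega
  edge_vert := fun {u v} h => by rcases h with h | h <;> exact show u < 6 by omega
  symm := ⟨fun u v h => by tauto⟩

/-- Planarity via Wagner's theorem: no `K₅` and no `K₃,₃` minor. -/
def Planar (G : FGraph) : Prop := ¬ IsMinor K5g G ∧ ¬ IsMinor K33g G

/-- In a maximal planar graph (planar triangulation), the triangle `abc` bounds a face: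
combinatorially, a new vertex can be placed inside it and joined to `a`, `b`, `c`
while preserving planarity. -/
def IsFaceTriangle (G : FGraph) (a b c : ℕ) : Prop :=
  G.Adj a b ∧ G.Adj b c ∧ G.Adj a c ∧
  ∀ v, v ∉ G.verts → Planar (addVertex G v {a, b, c})

/-- A perfect elimination scheme witnessing that `H` is a `k`-tree: a listing of the
vertices of `H` whose first `k` entries form a clique and each later entry has exactly
`k` earlier neighbours, which form a clique. -/
def IsPESk (k : ℕ) (l : List ℕ) (H : FGraph) : Prop :=
  l.Nodup ∧ H.verts = {v | v ∈ l} ∧ k ≤ l.length ∧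
  (∀ i j : Fin l.length, (i : ℕ) < k → (j : ℕ) < k → i ≠ j → H.Adj (l.get i) (l.get j)) ∧
  (∀ i : Fin l.length, k ≤ (i : ℕ) →
    ∃ s : Finset (Fin l.length), s.card = k ∧ (∀ j ∈ s, (j : ℕ) < (i : ℕ)) ∧
      (∀ a ∈ s, ∀ b ∈ s, a ≠ b → H.Adj (l.get a) (l.get b)) ∧
      (∀ j : Fin l.length, (j : ℕ) < (i : ℕ) → (H.Adj (l.get j) (l.get i) ↔ j ∈ s)))

/-- A vertex is simplicial if its neighbourhood induces a clique. -/
def IsSimplicial (G : FGraph) (v : ℕ) : Prop :=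
  v ∈ G.verts ∧ ∀ u w, G.Adj v u → G.Adj v w → u ≠ w → G.Adj u w

/-- A graph is chordal if it has no induced cycle of length greater than 3. -/
def IsChordal (G : FGraph) : Prop :=
  ∀ n : ℕ, 4 ≤ n → ¬ ∃ f : Fin n → ℕ, Function.Injective f ∧ (∀ i, f i ∈ G.verts) ∧
    ∀ i j : Fin n, G.Adj (f i) (f j) ↔ ((i : ℕ) + 1) % n = (j : ℕ) ∨ ((j : ℕ) + 1) % n = (i : ℕ)

/-- A (general) perfect elimination scheme: an ordering of the vertices such that each
vertex is simplicial in the subgraph induced by it and the earlier vertices. -/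
def IsPES (l : List ℕ) (G : FGraph) : Prop :=
  l.Nodup ∧ G.verts = {v | v ∈ l} ∧
  ∀ i : Fin l.length, IsSimplicial (G.induce {v | v ∈ l.take ((i : ℕ) + 1)}) (l.get i)

/-- `G` can be reduced to the empty graph by repeatedly deleting simplicial vertices. -/
inductive Reducible : FGraph → Prop
  | empty (G : FGraph) (h : G.verts = ∅) : Reducible G
  | delete (G : FGraph) (v : ℕ) (hv : IsSimplicial G v)
      (h : Reducible (G.deleteVerts {v})) : Reducible G

/-- `G` is 3-connected: at least 4 vertices, and deleting any two vertices leaves it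
connected. -/
def ThreeConnected (G : FGraph) : Prop :=
  4 ≤ G.verts.ncard ∧ ∀ S : Finset ℕ, S.card ≤ 2 → (G.deleteVerts ↑S).Connected

/-- `G` has a tree decomposition of width at most `k`. -/
def HasTreewidthLE (G : FGraph) (k : ℕ) : Prop :=
  ∃ (ι : Type) (T : SimpleGraph ι) (B : ι → Finset ℕ),
    T.Connected ∧ T.IsAcyclic ∧
    (∀ v ∈ G.verts, ∃ i, v ∈ B i) ∧
    (∀ u v, G.Adj u v → ∃ i, u ∈ B i ∧ v ∈ B i) ∧
    (∀ v ∈ G.verts, (SimpleGraph.induce {i | v ∈ B i} T).Connected) ∧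
    (∀ i, (B i).card ≤ k + 1)

/-- `G` is acyclic (a forest). -/
def AcyclicFG (G : FGraph) : Prop := G.coe.IsAcyclic

/-- `G` is a complete graph on its vertex set. -/
def CompleteFG (G : FGraph) : Prop := ∀ u ∈ G.verts, ∀ v ∈ G.verts, u ≠ v → G.Adj u v

/-- The path on the three vertices `0, 1, 2`. -/
def P3 : FGraph := addEdge (addEdge (cliqueGraph ∅) 0 1) 1 2


/-!
A chordal graph has a simplicial vertex outside any clique `K` that does not contain every
vertex. If the graph is not complete, choose a vertex `v` whose closed neighbourhood `N[v]`
contains `K` but not every vertex, and a component `C` of `G - N[v]`. The boundary `S` of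
`C` lies in `N(v)` and is a clique: two nonadjacent boundary vertices, joined by a shortest
path through `C`, would close up through `v` into an induced cycle of length at least 4.
Induction applied to `G[C ∪ S]` and the clique `S` yields a simplicial vertex in `C`; its
neighbourhood lies in `C ∪ S`, so it stays simplicial in `G`, and it misses `N[v] ⊇ K`.
Deleting simplicial vertices one at a time therefore reduces a chordal graph to the empty
graph, and listing them in reverse order gives a perfect elimination scheme. Conversely, in
a perfect elimination scheme the last vertex of an induced cycle of length at least 4 would
be simplicial among the earlier vertices, forcing its two cycle neighbours to be adjacent.
-/

theorem SimpleGraph.Walk.not_adj_getVert_of_length_eq_dist {V : Type*} {H : SimpleGraph V}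
    {u v : V} {p : H.Walk u v} (hp : p.length = H.dist u v) {i j : ℕ} (hij : i + 1 < j)
    (hj : j ≤ p.length) : ¬ H.Adj (p.getVert i) (p.getVert j) := by
  intro hadj
  have := H.dist_le ((p.take i).append (.cons hadj (p.drop j)))
  simp only [Walk.length_append, Walk.length_cons, Walk.take_length, Walk.drop_length] at this
  omega

namespace SimpleGraph.Subgraph

variable {V : Type*} {G : SimpleGraph V} {G' : G.Subgraph}

theorem deleteVerts_induce_of_subset {s T : Set V} (hT : T ⊆ G'.verts \ s) :
    (G'.deleteVerts s).induce T = G'.induce T := by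
  ext u w
  · rfl
  · simp only [induce_adj]
    exact ⟨fun h => ⟨h.1, h.2.1, h.2.2.2.2⟩,
      fun h => ⟨h.1, h.2.1, hT h.1, hT h.2.1, h.2.2⟩⟩

variable {U : Set V} {x y : V}

theorem getVert_mem_of_walk_induce (p : (G'.induce U).spanningCoe.Walk x y) (hy : y ∈ U)
    (i : ℕ) : p.getVert i ∈ U := by
  rcases lt_or_ge i p.length with hi | hi
  · exact (p.adj_getVert_succ hi).1
  · rwa [p.getVert_of_length_le hi]

theorem adj_getVert_iff_of_length_eq_dist {p : (G'.induce U).spanningCoe.Walk x y}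
    (hp : p.length = (G'.induce U).spanningCoe.dist x y) (hy : y ∈ U) {i j : ℕ} (hij : i < j)
    (hj : j ≤ p.length) : G'.Adj (p.getVert i) (p.getVert j) ↔ j = i + 1 := by
  refine ⟨fun hadj => ?_, fun h => h ▸ (p.adj_getVert_succ (by omega)).2.2⟩
  by_contra hne
  exact p.not_adj_getVert_of_length_eq_dist hp (by omega) hj
    ⟨getVert_mem_of_walk_induce p hy i, getVert_mem_of_walk_induce p hy j, hadj⟩

end SimpleGraph.Subgraph

theorem succ_mod_eq_or_succ_mod_eq_iff {n i j : ℕ} (hi : i < n) (hj : j < n) :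
    (i + 1) % n = j ∨ (j + 1) % n = i ↔
      j = i + 1 ∨ i = j + 1 ∨ (i = 0 ∧ j + 1 = n) ∨ (j = 0 ∧ i + 1 = n) := by
  have succ_mod : ∀ k < n, (k + 1) % n = if k + 1 = n then 0 else k + 1 := fun k hk => by
    split_ifs with h
    · rw [h, Nat.mod_self]
    · exact Nat.mod_eq_of_lt (by omega)
  rw [succ_mod i hi, succ_mod j hj]
  split_ifs <;> omega

theorem not_isChordal_of_cycle {G : FGraph} {n : ℕ} (hn : 4 ≤ n) {f : ℕ → ℕ}
    (hinj : Set.InjOn f {i | i < n}) (hmem : ∀ i < n, f i ∈ G.verts)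
    (hadj : ∀ i j, i < j → j < n → (G.Adj (f i) (f j) ↔ j = i + 1 ∨ (i = 0 ∧ j + 1 = n))) :
    ¬ IsChordal G := by
  refine fun hG => hG n hn ⟨fun i => f i, fun i j h => Fin.ext (hinj i.2 j.2 h),
    fun i => hmem i i.2, fun i j => ?_⟩
  rw [succ_mod_eq_or_succ_mod_eq_iff i.2 j.2]
  rcases lt_trichotomy (i : ℕ) j with h | h | h
  · rw [hadj i j h j.2]
    omega
  · obtain rfl := Fin.ext h
    exact iff_of_false (fun h' => G.adj_sub h' rfl) (by omega)
  · rw [G.adj_comm, hadj j i h i.2]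
    omega

theorem exists_adj_adj_not_adj_of_cycle {G : FGraph} {n : ℕ} (hn : 4 ≤ n) {f : Fin n → ℕ}
    (hadj : ∀ i j : Fin n, G.Adj (f i) (f j) ↔ ((i : ℕ) + 1) % n = j ∨ ((j : ℕ) + 1) % n = i)
    (i : Fin n) : ∃ a b : Fin n, G.Adj (f i) (f a) ∧ G.Adj (f i) (f b) ∧ a ≠ b ∧
      ¬ G.Adj (f a) (f b) := by
  have hi := i.2
  have hadj' (a b : Fin n) : G.Adj (f a) (f b) ↔ (b : ℕ) = a + 1 ∨ (a : ℕ) = b + 1 ∨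
      ((a : ℕ) = 0 ∧ (b : ℕ) + 1 = n) ∨ ((b : ℕ) = 0 ∧ (a : ℕ) + 1 = n) :=
    (hadj a b).trans (succ_mod_eq_or_succ_mod_eq_iff a.2 b.2)
  refine ⟨⟨if (i : ℕ) + 1 = n then 0 else i + 1, by split_ifs <;> omega⟩,
    ⟨if (i : ℕ) = 0 then n - 1 else i - 1, by split_ifs <;> omega⟩, ?_, ?_, ?_, ?_⟩ <;>
  simp only [hadj', ne_eq, Fin.ext_iff] <;> split_ifs <;>
    (try simp only [true_or, true_and, false_or, false_and]) <;> omega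

theorem IsChordal.induce {G : FGraph} (hG : IsChordal G) (s : Set ℕ) :
    IsChordal (G.induce s) := by
  rintro n hn ⟨f, hinj, hmem, hadj⟩
  refine hG n hn ⟨f, hinj, fun i => ?_, fun i j => ?_⟩
  · have : (G.induce s).Adj (f i) (f ⟨(i + 1) % n, Nat.mod_lt _ (by omega)⟩) :=
      (hadj i _).2 (Or.inl rfl)
    exact G.edge_vert this.2.2
  · rw [← hadj i j, Subgraph.induce_adj]
    exact ⟨fun h => ⟨hmem i, hmem j, h⟩, fun h => h.2.2⟩

theorem IsSimplicial.of_induce {G : FGraph} {s : Set ℕ} {u : ℕ}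
    (hu : IsSimplicial (G.induce s) u) (huV : u ∈ G.verts) (hN : ∀ p, G.Adj u p → p ∈ s) :
    IsSimplicial G u := by
  refine ⟨huV, fun p q hp hq hpq => ?_⟩
  exact (hu.2 p q ⟨hu.1, hN p hp, hp⟩ ⟨hu.1, hN q hq, hq⟩ hpq).2.2

open Subgraph in
theorem IsChordal.adj_of_reachable_avoiding {G : FGraph} (hG : IsChordal G) {U : Set ℕ}
    {v x y : ℕ} (hxy : x ≠ y) (hvx : G.Adj v x) (hvy : G.Adj v y)
    (hU : ∀ u ∈ U, u ≠ v ∧ ¬ G.Adj v u)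
    (hreach : (G.induce (insert x (insert y U))).spanningCoe.Reachable x y) : G.Adj x y := by
  by_contra hnxy
  obtain ⟨p, hpath, hlen⟩ := hreach.exists_path_of_dist
  have hyU : y ∈ insert x (insert y U) := by simp
  have hm : 2 ≤ p.length := by
    have h0 : p.length ≠ 0 := fun h => hxy (p.eq_of_length_eq_zero h)
    have h1 : p.length ≠ 1 := fun h => hnxy <| by
      simpa [← h] using (p.adj_getVert_succ (i := 0) (by omega)).2.2
    omega
  have hinterior (i : ℕ) (h0 : 0 < i) (hm : i < p.length) : p.getVert i ∈ U := by
    have hx : p.getVert i ≠ x := fun h => by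
      have := (hpath.getVert_eq_start_iff hm.le).1 h; omega
    have hy : p.getVert i ≠ y := fun h => by
      have := (hpath.getVert_eq_end_iff hm.le).1 h; omega
    simpa [hx, hy] using getVert_mem_of_walk_induce p hyU i
  have hapex_adj (i : ℕ) (hi : i ≤ p.length) :
      G.Adj (p.getVert i) v ↔ i = 0 ∨ i = p.length := by
    rcases Nat.eq_zero_or_pos i with rfl | h0
    · simpa using hvx.symm
    rcases hi.lt_or_eq with hm | rfl
    · simpa [h0.ne', hm.ne, G.adj_comm] using (hU _ (hinterior i h0 hm)).2
    · simpa using hvy.symm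
  have hapex_ne (i : ℕ) (hi : i ≤ p.length) : p.getVert i ≠ v := by
    rcases Nat.eq_zero_or_pos i with rfl | h0
    · simpa using hvx.ne.symm
    rcases hi.lt_or_eq with hm | rfl
    · exact (hU _ (hinterior i h0 hm)).1
    · simpa using hvy.ne.symm
  refine not_isChordal_of_cycle (n := p.length + 2)
    (f := fun i => if i ≤ p.length then p.getVert i else v) (by omega) ?_ ?_ ?_ hG
  · intro i hi j hj hij
    simp only [Set.mem_ofPred_eq] at hi hj hij
    split_ifs at hij with hi' hj' hj'
    · exact hpath.getVert_injOn hi' hj' hij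
    · exact absurd hij (hapex_ne i hi')
    · exact absurd hij.symm (hapex_ne j hj')
    · omega
  · intro i hi
    split_ifs with hi'
    · rcases hi'.lt_or_eq with hm | rfl
      · exact G.edge_vert (p.adj_getVert_succ hm).2.2
      · simpa using G.edge_vert hvy.symm
    · exact G.edge_vert hvx
  · intro i j hij hj
    rcases Nat.lt_succ_iff_lt_or_eq.1 hj with hj | rfl
    · simp only [show i ≤ p.length by omega, show j ≤ p.length by omega, if_true,
        adj_getVert_iff_of_length_eq_dist hlen hyU hij (by omega : j ≤ p.length)]
      omega
    · simp only [show i ≤ p.length by omega, show ¬ p.length + 1 ≤ p.length by omega, if_true,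
        if_false, hapex_adj i (by omega), and_true]
      omega

def farVerts (G : FGraph) (v : ℕ) : Set ℕ := {w | w ∈ G.verts ∧ w ≠ v ∧ ¬ G.Adj v w}

def farComponent (G : FGraph) (v z : ℕ) : Set ℕ :=
  {c | c ∈ farVerts G v ∧ (G.induce (farVerts G v)).spanningCoe.Reachable z c}

-- Every neighbour of `farComponent G v z` outside it is adjacent to `v`, so this is its
-- whole boundary.
def farBoundary (G : FGraph) (v z : ℕ) : Set ℕ :=
  {s | G.Adj v s ∧ ∃ c ∈ farComponent G v z, G.Adj c s}

section FarComponent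

variable {G : FGraph} {v z : ℕ}

theorem mem_farComponent_self (hz : z ∈ farVerts G v) : z ∈ farComponent G v z :=
  ⟨hz, .refl z⟩

theorem mem_farComponent_union_farBoundary_of_adj {c p : ℕ} (hc : c ∈ farComponent G v z)
    (hcp : G.Adj c p) : p ∈ farComponent G v z ∪ farBoundary G v z := by
  by_cases hvp : G.Adj v p
  · exact Or.inr ⟨hvp, c, hc, hcp⟩
  · have hp : p ∈ farVerts G v :=
      ⟨G.edge_vert hcp.symm, fun h => hc.1.2.2 (h ▸ hcp.symm), hvp⟩
    have hcp' : (G.induce (farVerts G v)).spanningCoe.Adj c p := ⟨hc.1, hp, hcp⟩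
    exact Or.inl ⟨hp, hc.2.trans hcp'.reachable⟩

theorem IsChordal.pairwise_adj_farBoundary (hG : IsChordal G) :
    (farBoundary G v z).Pairwise G.Adj := by
  rintro x ⟨hvx, cx, hcx, hx⟩ y ⟨hvy, cy, hcy, hy⟩ hxy
  refine hG.adj_of_reachable_avoiding (U := farVerts G v) hxy hvx hvy
    (fun u hu => ⟨hu.2.1, hu.2.2⟩) ?_
  have hmono : (G.induce (farVerts G v)).spanningCoe ≤
      (G.induce (insert x (insert y (farVerts G v)))).spanningCoe :=
    Subgraph.spanningCoe_le_of_le <| Subgraph.induce_mono_right <|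
      (Set.subset_insert _ _).trans (Set.subset_insert _ _)
  have hxc : (G.induce (insert x (insert y (farVerts G v)))).spanningCoe.Adj x cx :=
    ⟨by simp, by simp [hcx.1], hx.symm⟩
  have hcy' : (G.induce (insert x (insert y (farVerts G v)))).spanningCoe.Adj cy y :=
    ⟨by simp [hcy.1], by simp, hy⟩
  exact hxc.reachable.trans (((hcx.2.symm.trans hcy.2).mono hmono).trans hcy'.reachable)

end FarComponent

theorem exists_farVerts_nonempty {G : FGraph} {K : Set ℕ} (hK : K.Pairwise G.Adj)
    (hKV : K ⊆ G.verts) (hG : ¬ ∀ a ∈ G.verts, ∀ b ∈ G.verts, a ≠ b → G.Adj a b) :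
    ∃ v ∈ G.verts, (farVerts G v).Nonempty ∧ ∀ k ∈ K, k = v ∨ G.Adj v k := by
  by_cases hKfar : ∃ k ∈ K, (farVerts G k).Nonempty
  · obtain ⟨k, hk, hfar⟩ := hKfar
    exact ⟨k, hKV hk, hfar, fun k' hk' => or_iff_not_imp_left.2 fun h => hK hk hk' (Ne.symm h)⟩
  · push Not at hG
    obtain ⟨a, ha, b, hb, hab, hnab⟩ := hG
    refine ⟨a, ha, ⟨b, hb, hab.symm, hnab⟩, fun k hk => ?_⟩
    by_contra! h
    exact hKfar ⟨k, hk, a, ha, h.1.symm, fun hka => h.2 hka.symm⟩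

theorem IsChordal.exists_isSimplicial_notMem {G : FGraph} (hfin : G.verts.Finite)
    (hG : IsChordal G) {K : Set ℕ} (hK : K.Pairwise G.Adj) (hKV : K ⊆ G.verts) {z : ℕ}
    (hz : z ∈ G.verts) (hzK : z ∉ K) : ∃ u ∉ K, IsSimplicial G u := by
  induction hn : G.verts.ncard using Nat.strong_induction_on generalizing G K z with
  | _ n ih =>
  by_cases hcomplete : ∀ a ∈ G.verts, ∀ b ∈ G.verts, a ≠ b → G.Adj a b
  · exact ⟨z, hzK, hz, fun p q hp hq hpq =>
      hcomplete p (G.edge_vert hp.symm) q (G.edge_vert hq.symm) hpq⟩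
  obtain ⟨v, hv, ⟨w, hw⟩, hKv⟩ := exists_farVerts_nonempty hK hKV hcomplete
  set C := farComponent G v w
  set S := farBoundary G v w
  have hCS : C ∪ S ⊆ G.verts \ {v} := by
    rintro u (hu | ⟨hvu, -⟩)
    · exact ⟨hu.1.1, hu.1.2.1⟩
    · exact ⟨G.edge_vert hvu.symm, hvu.ne.symm⟩
  have hlt : (G.induce (C ∪ S)).verts.ncard < n :=
    hn ▸ Set.ncard_lt_ncard (hCS.trans_ssubset (Set.sdiff_singleton_ssubset.2 hv)) hfin
  have hS : S.Pairwise (G.induce (C ∪ S)).Adj := fun x hx y hy hxy =>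
    ⟨Or.inr hx, Or.inr hy, hG.pairwise_adj_farBoundary hx hy hxy⟩
  obtain ⟨u, huS, hu⟩ := ih _ hlt (hfin.subset (hCS.trans Set.sdiff_subset)) (hG.induce _) hS
    Set.subset_union_right (Or.inl (mem_farComponent_self hw)) (fun h => hw.2.2 h.1) rfl
  have huC : u ∈ C := hu.1.resolve_right huS
  refine ⟨u, fun huK => ?_,
    hu.of_induce huC.1.1 fun p hp => mem_farComponent_union_farBoundary_of_adj huC hp⟩
  rcases hKv u huK with rfl | h
  · exact huC.1.2.1 rfl
  · exact huC.1.2.2 h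

theorem IsChordal.reducible {G : FGraph} (hfin : G.verts.Finite) (hG : IsChordal G) :
    Reducible G := by
  induction hn : G.verts.ncard generalizing G with
  | zero => exact .empty G ((Set.ncard_eq_zero hfin).1 hn)
  | succ n ih =>
    obtain ⟨z, hz⟩ : G.verts.Nonempty := Set.nonempty_of_ncard_ne_zero (by omega)
    obtain ⟨v, -, hv⟩ := hG.exists_isSimplicial_notMem hfin (K := ∅) (by simp) (by simp) hz
      (by simp)
    refine .delete G v hv (ih (hfin.subset Set.sdiff_subset) (hG.induce _) ?_)
    exact (Set.ncard_sdiff_singleton_of_mem hv.1).trans (by omega)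

theorem IsPES.concat {G : FGraph} {l : List ℕ} {v : ℕ} (hl : IsPES l (G.deleteVerts {v}))
    (hv : IsSimplicial G v) : IsPES (l ++ [v]) G := by
  obtain ⟨hnd, hverts, hsimp⟩ := hl
  have hmem (z : ℕ) : z ∈ l ↔ z ∈ G.verts ∧ z ≠ v := (Set.ext_iff.1 hverts z).symm
  have hverts' : G.verts = {z | z ∈ l ++ [v]} := by
    ext z
    by_cases hz : z = v <;> simp [hmem, hz, hv.1]
  refine ⟨hnd.append (List.nodup_singleton v) (by simp [hmem]), hverts', fun i => ?_⟩
  rcases Nat.lt_succ_iff_lt_or_eq.1 (by simpa using i.2) with hi | hi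
  · have hprefix : {z | z ∈ l.take (i + 1)} ⊆ G.verts \ {v} := fun z hz =>
      (hmem z).1 (List.mem_of_mem_take hz)
    simpa [List.take_append_of_le_length (Nat.succ_le_of_lt hi), List.getElem_append_left hi,
      Subgraph.deleteVerts_induce_of_subset hprefix] using hsimp ⟨i, hi⟩
  · rw [List.take_of_length_le (by simp [hi]), ← hverts']
    simpa [hi, Subgraph.induce_self_verts] using hv

theorem Reducible.exists_isPES {G : FGraph} (h : Reducible G) : ∃ l, IsPES l G := by
  induction h with
  | empty G h => exact ⟨[], List.nodup_nil, by simp [h], fun i => i.elim0⟩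
  | delete G v hv _ ih => exact ih.elim fun l hl => ⟨l ++ [v], hl.concat hv⟩

theorem IsPES.exists_last {G : FGraph} {l : List ℕ} (hl : IsPES l G) {T : Finset ℕ}
    (hT : T.Nonempty) (hTV : ↑T ⊆ G.verts) :
    ∃ t ∈ T, ∀ p ∈ T, ∀ q ∈ T, G.Adj t p → G.Adj t q → p ≠ q → G.Adj p q := by
  obtain ⟨t, htT, hmax⟩ := T.exists_max_image l.idxOf hT
  have hl_mem (p : ℕ) (hp : p ∈ T) : p ∈ l := by simpa [hl.2.1] using hTV hp
  have hprefix (p : ℕ) (hp : p ∈ T) : p ∈ l.take (l.idxOf t + 1) :=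
    (List.mem_take_iff_idxOf_lt (hl_mem p hp)).2 (Nat.lt_succ_of_le (hmax p hp))
  have hsimp := hl.2.2 ⟨l.idxOf t, List.idxOf_lt_length_iff.2 (hl_mem t htT)⟩
  simp only [List.get_eq_getElem, List.getElem_idxOf] at hsimp
  exact ⟨t, htT, fun p hp q hq htp htq hpq =>
    (hsimp.2 p q ⟨hprefix t htT, hprefix p hp, htp⟩ ⟨hprefix t htT, hprefix q hq, htq⟩
      hpq).2.2⟩

theorem IsPES.isChordal {G : FGraph} {l : List ℕ} (hl : IsPES l G) : IsChordal G := by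
  classical
  rintro n hn ⟨f, hf, hfV, hadj⟩
  obtain ⟨_, hi, hsimp⟩ := hl.exists_last (T := Finset.univ.image f)
    (Finset.univ_nonempty_iff.2 ⟨⟨0, by omega⟩⟩ |>.image f)
    (by simpa [Set.subset_def] using hfV)
  obtain ⟨i, -, rfl⟩ := Finset.mem_image.1 hi
  obtain ⟨a, b, hia, hib, hab, hnab⟩ := exists_adj_adj_not_adj_of_cycle hn hadj i
  exact hnab (hsimp _ (by simp) _ (by simp) hia hib (hf.ne hab))

theorem chordal_iff_pes (G : FGraph) (hfin : G.verts.Finite) :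
    (IsChordal G ↔ Reducible G) ∧ (IsChordal G ↔ ∃ l : List ℕ, IsPES l G) := by
  have hred : IsChordal G → Reducible G := fun hG => hG.reducible hfin
  have hpes : Reducible G → ∃ l, IsPES l G := Reducible.exists_isPES
  have hchordal : (∃ l, IsPES l G) → IsChordal G := fun ⟨_, hl⟩ => hl.isChordal
  exact ⟨⟨hred, hchordal ∘ hpes⟩, ⟨hpes ∘ hred, hchordal⟩⟩
end

section
/- Every partial k-tree with at least k vertices is a spanning subgraph of some k-tree; that is, it can be completed to a k-tree on the same vertex set by adding edges only. -/
open SimpleGraph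

/-!
Replay the construction of the `k`-tree `H ⊇ G`, keeping only the vertices of `W = V(G)`.
A vertex `v ∈ W` that `H` attaches to a `k`-clique `s` is attached instead to a `k`-clique of
the graph built so far that contains `s ∩ W`. This works because of the invariant that the
trace on `W` of every `k`-clique of `H` lies in some `k`-clique of the completion; the first
`k` vertices of `W` are simply taken as a clique.
-/

lemma IsKTree.verts_finite {k : ℕ} {H : FGraph} (h : IsKTree k H) : H.verts.Finite := by
  induction h with
  | base s => exact s.finite_toSet
  | grow G _ _ _ _ v _ ih => exact ih.insert v

lemma addVertex_adj_new {G : FGraph} {v x : ℕ} {s : Finset ℕ} (hv : v ∉ G.verts)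
    (h : (addVertex G v s).Adj v x) : x ∈ s := by
  rcases h with h | h | h
  · exact absurd (G.edge_vert h) hv
  · exact h.2.2.1
  · exact absurd rfl h.2.1

namespace IsCliqueIn

lemma cliqueGraph (s : Finset ℕ) : IsCliqueIn (cliqueGraph s) s :=
  ⟨subset_rfl, fun _ hu _ hv hne => ⟨hu, hv, hne⟩⟩

lemma subset {G : FGraph} {s t : Finset ℕ} (h : IsCliqueIn G s) (hts : t ⊆ s) :
    IsCliqueIn G t :=
  ⟨fun _ hx => h.1 (hts hx), fun u hu v hv hne => h.2 u (hts hu) v (hts hv) hne⟩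

lemma addVertex {G : FGraph} {v : ℕ} {s t : Finset ℕ} (h : IsCliqueIn G t) :
    IsCliqueIn (_root_.addVertex G v s) t :=
  ⟨fun _ hx => Set.mem_insert_of_mem _ (h.1 hx),
    fun a ha b hb hab => Or.inl (h.2 a ha b hb hab)⟩

lemma insert_addVertex {G : FGraph} {v : ℕ} {s : Finset ℕ} (h : IsCliqueIn G s)
    (hv : v ∉ G.verts) : IsCliqueIn (_root_.addVertex G v s) (insert v s) := by
  have hvs : ∀ x ∈ s, x ≠ v := fun x hx e => hv (e ▸ h.1 hx)
  refine ⟨by rw [Finset.coe_insert]; exact Set.insert_subset_insert h.1, ?_⟩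
  intro a ha b hb hab
  rcases Finset.mem_insert.mp ha with rfl | has <;> rcases Finset.mem_insert.mp hb with rfl | hbs
  · exact absurd rfl hab
  · exact Or.inr (Or.inl ⟨rfl, hvs b hbs, hbs, h.1 hbs⟩)
  · exact Or.inr (Or.inr ⟨rfl, hvs a has, has, h.1 has⟩)
  · exact Or.inl (h.2 a has b hbs hab)

lemma of_addVertex_of_notMem {G : FGraph} {v : ℕ} {s t : Finset ℕ}
    (h : IsCliqueIn (_root_.addVertex G v s) t) (hvt : v ∉ t) : IsCliqueIn G t := by
  refine ⟨fun x hx => (h.1 hx).resolve_left fun e => hvt (e ▸ hx), ?_⟩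
  intro a ha b hb hab
  rcases h.2 a ha b hb hab with h | h | h
  · exact h
  · exact absurd (h.1 ▸ ha) hvt
  · exact absurd (h.1 ▸ hb) hvt

lemma subset_insert_of_addVertex {G : FGraph} {v : ℕ} {s t : Finset ℕ}
    (h : IsCliqueIn (_root_.addVertex G v s) t) (hv : v ∉ G.verts) (hvt : v ∈ t) :
    t ⊆ insert v s := by
  intro x hx
  rcases eq_or_ne x v with rfl | hxv
  · exact Finset.mem_insert_self x s
  · exact Finset.mem_insert_of_mem (addVertex_adj_new hv (h.2 v hvt x hx hxv.symm))

end IsCliqueIn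

structure IsKTreeCompletion (k : ℕ) (H : FGraph) (W : Finset ℕ) (H' : FGraph) : Prop where
  isKTree : IsKTree k H'
  verts_eq : H'.verts = W
  adj : ∀ u v, H.Adj u v → u ∈ W → v ∈ W → H'.Adj u v
  exists_clique : ∀ t : Finset ℕ, t.card = k → IsCliqueIn H t →
    ∃ t' : Finset ℕ, t'.card = k ∧ IsCliqueIn H' t' ∧ t ∩ W ⊆ t'

namespace IsKTreeCompletion

variable {k : ℕ} {W : Finset ℕ}

lemma cliqueGraph (H : FGraph) (hW : W.card = k) :
    IsKTreeCompletion k H W (cliqueGraph W) where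
  isKTree := .base W hW
  verts_eq := rfl
  adj _ _ h hu hv := ⟨hu, hv, H.adj_sub h⟩
  exists_clique _ _ _ := ⟨W, hW, .cliqueGraph W, Finset.inter_subset_right⟩

variable {G H' : FGraph} {s : Finset ℕ} {v : ℕ}

lemma addVertex_of_notMem (hc : IsKTreeCompletion k G W H') (hs : s.card = k)
    (hcl : IsCliqueIn G s) (hvG : v ∉ G.verts) (hvW : v ∉ W) :
    IsKTreeCompletion k (addVertex G v s) W H' where
  isKTree := hc.isKTree
  verts_eq := hc.verts_eq
  adj x y h hx hy := by
    rcases h with h | h | h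
    · exact hc.adj x y h hx hy
    · exact absurd (h.1 ▸ hx) hvW
    · exact absurd (h.1 ▸ hy) hvW
  exists_clique t htk htcl := by
    by_cases hvt : v ∈ t
    · obtain ⟨s', hs'k, hs'cl, hs'⟩ := hc.exists_clique s hs hcl
      refine ⟨s', hs'k, hs'cl, ?_⟩
      calc t ∩ W ⊆ insert v s ∩ W :=
            Finset.inter_subset_inter_right (htcl.subset_insert_of_addVertex hvG hvt)
        _ = s ∩ W := Finset.insert_inter_of_notMem hvW
        _ ⊆ s' := hs'
    · exact hc.exists_clique t htk (htcl.of_addVertex_of_notMem hvt)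

lemma exists_addVertex_insert (hc : IsKTreeCompletion k G W H') (hs : s.card = k)
    (hcl : IsCliqueIn G s) (hvG : v ∉ G.verts) (hvW : v ∉ W) :
    ∃ H'', IsKTreeCompletion k (addVertex G v s) (insert v W) H'' := by
  obtain ⟨s', hs'k, hs'cl, hs'⟩ := hc.exists_clique s hs hcl
  have hvH' : v ∉ H'.verts := by rw [hc.verts_eq]; exact_mod_cast hvW
  refine ⟨addVertex H' v s', ⟨.grow H' hc.isKTree s' hs'k hs'cl v hvH', ?_, ?_, ?_⟩⟩
  · change insert v H'.verts = _
    rw [hc.verts_eq, Finset.coe_insert]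
  · intro x y h hx hy
    rcases h with h | ⟨rfl, hyv, hys, -⟩ | ⟨rfl, hxv, hxs, -⟩
    · have hxv : x ≠ v := fun e => hvG (e ▸ G.edge_vert h)
      have hyv : y ≠ v := fun e => hvG (e ▸ G.edge_vert h.symm)
      exact Or.inl (hc.adj x y h (Finset.mem_of_mem_insert_of_ne hx hxv)
        (Finset.mem_of_mem_insert_of_ne hy hyv))
    · have hys' : y ∈ s' :=
        hs' (Finset.mem_inter.mpr ⟨hys, Finset.mem_of_mem_insert_of_ne hy hyv⟩)
      exact Or.inr (Or.inl ⟨rfl, hyv, hys', hs'cl.1 hys'⟩)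
    · have hxs' : x ∈ s' :=
        hs' (Finset.mem_inter.mpr ⟨hxs, Finset.mem_of_mem_insert_of_ne hx hxv⟩)
      exact Or.inr (Or.inr ⟨rfl, hxv, hxs', hs'cl.1 hxs'⟩)
  · intro t htk htcl
    by_cases hvt : v ∈ t
    · have htrace : t ∩ insert v W ⊆ insert v s' :=
        calc t ∩ insert v W ⊆ insert v s ∩ insert v W :=
              Finset.inter_subset_inter_right (htcl.subset_insert_of_addVertex hvG hvt)
          _ = insert v (s ∩ W) := (Finset.insert_inter_distrib s W v).symm
          _ ⊆ insert v s' := Finset.insert_subset_insert v hs'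
      have hvs' : v ∉ s' := fun h => hvH' (hs'cl.1 h)
      obtain ⟨t', htrace', ht's', ht'k⟩ := Finset.exists_subsuperset_card_eq htrace
        ((Finset.card_le_card Finset.inter_subset_left).trans htk.le)
        (by rw [Finset.card_insert_of_notMem hvs', hs'k]; omega)
      exact ⟨t', ht'k, (hs'cl.insert_addVertex hvH').subset ht's', htrace'⟩
    · obtain ⟨t', ht'k, ht'cl, ht'⟩ := hc.exists_clique t htk (htcl.of_addVertex_of_notMem hvt)
      refine ⟨t', ht'k, ht'cl.addVertex, fun x hx => ht' ?_⟩
      obtain ⟨hxt, hxW⟩ := Finset.mem_inter.mp hx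
      exact Finset.mem_inter.mpr
        ⟨hxt, Finset.mem_of_mem_insert_of_ne hxW fun e => hvt (e ▸ hxt)⟩

end IsKTreeCompletion

lemma IsKTree.exists_completion {k : ℕ} {H : FGraph} (hH : IsKTree k H) (W : Finset ℕ)
    (hW : ↑W ⊆ H.verts) (hk : k ≤ W.card) : ∃ H', IsKTreeCompletion k H W H' := by
  induction hH generalizing W with
  | base s hs =>
    have hWs : W = s := Finset.eq_of_subset_of_card_le (by exact_mod_cast hW) (hs ▸ hk)
    exact ⟨_, .cliqueGraph _ (hWs ▸ hs)⟩
  | grow G _ s hs hcl v hvG ih =>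
    by_cases hvW : v ∈ W
    · rcases hk.eq_or_lt with hWk | hWk
      · exact ⟨_, .cliqueGraph _ hWk.symm⟩
      have hW' : ↑(W.erase v) ⊆ G.verts := fun x hx =>
        (hW (Finset.mem_of_mem_erase hx)).resolve_left (Finset.ne_of_mem_erase hx)
      obtain ⟨H', hc⟩ := ih (W.erase v) hW' (by rw [Finset.card_erase_of_mem hvW]; omega)
      rw [← Finset.insert_erase hvW]
      exact hc.exists_addVertex_insert hs hcl hvG (Finset.notMem_erase v W)
    · have hW' : ↑W ⊆ G.verts := fun x hx => (hW hx).resolve_left fun e => hvW (e ▸ hx)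
      obtain ⟨H', hc⟩ := ih W hW' hk
      exact ⟨H', hc.addVertex_of_notMem hs hcl hvG hvW⟩

theorem partial_ktree_completion (k : ℕ) (G : FGraph) (h : IsPartialKTree k G)
    (hn : k ≤ G.verts.ncard) :
    ∃ H : FGraph, IsKTree k H ∧ G ≤ H ∧ H.verts = G.verts := by
  obtain ⟨H, hH, hGH⟩ := h
  have hfin : G.verts.Finite := hH.verts_finite.subset hGH.1
  have hWG : ↑hfin.toFinset = G.verts := hfin.coe_toFinset
  obtain ⟨H', hc⟩ := hH.exists_completion hfin.toFinset (hWG.symm ▸ hGH.1)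
    (by rwa [Set.ncard_eq_toFinset_card _ hfin] at hn)
  have hverts : H'.verts = G.verts := hc.verts_eq.trans hWG
  refine ⟨H', hc.isKTree, ⟨hverts.ge, fun u v huv => ?_⟩, hverts⟩
  exact hc.adj u v (hGH.2 huv) (hfin.mem_toFinset.mpr (G.edge_vert huv))
    (hfin.mem_toFinset.mpr (G.edge_vert huv.symm))
end

section
/- Let G be a 3-connected planar graph and let {a, b, c} be a 3-element vertex cut of G such that one component of G - {a,b,c} is a single vertex u. Then G - {a,b,c} has exactly two connected components; having three or more components would force a K_{3,3} minor, contradicting planarity. -/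
open SimpleGraph

/-!
Each of `a`, `b`, `c` has a neighbour in every component of `G - {a, b, c}`: a walk in
`G - {b, c}` from the component to `a`, which exists by 3-connectivity, can leave the component
only through `a`. So with three components, `a`, `b`, `c` as one side and the three components
(connected, pairwise disjoint) as the other side would be the branch sets of a `K₃,₃` minor.
-/

open Function

namespace SimpleGraph.Subgraph

variable {V : Type*} {H : SimpleGraph V}

theorem exists_adj_of_connected_deleteVerts_diff {G : H.Subgraph} {S : Set V} {t : V}
    (htS : t ∈ S) (htG : t ∈ G.verts) (hconn : (G.deleteVerts (S \ {t})).Connected)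
    (C : (G.deleteVerts S).coe.ConnectedComponent) : ∃ x ∈ C.supp, G.Adj x t := by
  obtain ⟨x₀, hx₀⟩ := C.nonempty_supp
  obtain ⟨p⟩ := hconn.coe.preconnected ⟨x₀, x₀.2.1, fun h => x₀.2.2 h.1⟩
    ⟨t, htG, fun h => h.2 rfl⟩
  let T : Set (G.deleteVerts (S \ {t})).verts :=
    {z | ∃ h : z.1 ∈ (G.deleteVerts S).verts, ⟨z.1, h⟩ ∈ C.supp}
  obtain ⟨d, -, ⟨hfst, hfstC⟩, hsnd⟩ :=
    p.exists_boundary_dart T ⟨x₀.2, hx₀⟩ (fun ⟨h, _⟩ => h.2 htS)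
  have hadj : G.Adj d.fst d.snd := (deleteVerts_adj.mp d.adj).2.2.2.2
  have hsnd_eq : d.snd.1 = t := by
    by_contra hne
    have hsndD : d.snd.1 ∈ (G.deleteVerts S).verts :=
      ⟨d.snd.2.1, fun h => d.snd.2.2 ⟨h, hne⟩⟩
    refine hsnd ⟨hsndD, ?_⟩
    rw [ConnectedComponent.mem_supp_iff] at hfstC ⊢
    rw [← hfstC]
    exact (ConnectedComponent.connectedComponentMk_eq_of_adj
      (show (G.deleteVerts S).coe.Adj _ _ from deleteVerts_adj.mpr
        ⟨hfst.1, hfst.2, hsndD.1, hsndD.2, hadj⟩)).symm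
  exact ⟨⟨d.fst, hfst⟩, hfstC, by rwa [hsnd_eq] at hadj⟩

theorem connected_induce_image_supp {G D : H.Subgraph} (hDG : D ≤ G)
    (C : D.coe.ConnectedComponent) : (G.induce (Subtype.val '' C.supp)).Connected := by
  refine (C.connected_toSubgraph.coeSubgraph).mono ⟨fun _ h => by simpa using h, ?_⟩ (by simp)
  intro x y h
  exact ⟨by simpa using edge_vert _ h, by simpa using edge_vert _ h.symm,
    hDG.2 (coeSubgraph_le _ |>.2 h)⟩

theorem connected_induce_singleton {G : H.Subgraph} {v : V} : (G.induce {v}).Connected :=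
  Connected.mono (H := H.singletonSubgraph v) ⟨le_rfl, fun _ _ h => by cases h⟩ rfl
    singletonSubgraph_connected

end SimpleGraph.Subgraph

theorem Matrix.injective_vecCons_three {α : Type*} {x y z : α} (hxy : x ≠ y) (hxz : x ≠ z)
    (hyz : y ≠ z) : Injective ![x, y, z] := by
  simp only [Matrix.vecCons, Fin.cons_injective_iff]
  simp [hxy, hxz, hyz, Injective, eq_iff_true_of_subsingleton]

theorem SimpleGraph.exists_connectedComponent_ne_of_not_connected {V : Type*} {G : SimpleGraph V}
    [Nonempty V] (h : ¬ G.Connected) : ∃ x y : G.ConnectedComponent, x ≠ y := by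
  obtain ⟨v, w, hvw⟩ : ∃ v w : V, ¬ G.Reachable v w := by
    simpa [connected_iff, Preconnected] using h
  exact ⟨G.connectedComponentMk v, G.connectedComponentMk w, by simpa using hvw⟩

theorem isMinor_K33g_of_branchSets (G : FGraph) (A : Fin 3 → ℕ) (hA : Injective A)
    (hAG : ∀ i, A i ∈ G.verts) (B : Fin 3 → Set ℕ) (hBG : ∀ j, B j ⊆ G.verts)
    (hBfin : ∀ j, (B j).Finite) (hBconn : ∀ j, (G.induce (B j)).Connected)
    (hBdisj : Pairwise (Disjoint on B)) (hAB : ∀ i j, A i ∉ B j)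
    (hadj : ∀ i j, ∃ y ∈ B j, G.Adj (A i) y) : IsMinor K33g G := by
  classical
  let β : ℕ → Finset ℕ := fun n =>
    if h : n < 3 then {A ⟨n, h⟩}
    else if h' : n < 6 then (hBfin ⟨n - 3, by omega⟩).toFinset else ∅
  have hβA (i : Fin 3) : β i = {A i} := by simp [β]
  have hβB (j : Fin 3) : β (j + 3) = (hBfin j).toFinset := by
    simp [β, show ¬ (j : ℕ) + 3 < 3 by omega, show (j : ℕ) + 3 < 6 by omega]
  have hsplit (n : ℕ) (hn : n < 6) : (∃ i : Fin 3, n = i) ∨ ∃ j : Fin 3, n = j + 3 := by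
    by_cases h : n < 3
    · exact .inl ⟨⟨n, h⟩, rfl⟩
    · exact .inr ⟨⟨n - 3, by omega⟩, by simp; omega⟩
  refine ⟨β, fun n hn => ?_, fun m hm n hn hmn => ?_, fun m n hmn => ?_⟩
  · rcases hsplit n hn with ⟨i, rfl⟩ | ⟨j, rfl⟩
    · rw [hβA, Finset.coe_singleton]
      exact ⟨Finset.singleton_nonempty _, Set.singleton_subset_iff.mpr (hAG i),
        Subgraph.connected_induce_singleton.coe⟩
    · rw [hβB, Set.Finite.coe_toFinset]
      exact ⟨by simpa using (hBconn j).nonempty, hBG j, (hBconn j).coe⟩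
  · rcases hsplit m hm with ⟨i, rfl⟩ | ⟨j, rfl⟩ <;>
      rcases hsplit n hn with ⟨i', rfl⟩ | ⟨j', rfl⟩
    · simpa [hβA] using hA.ne (fun h => hmn (by rw [h]))
    · simpa [hβA, hβB] using hAB i j'
    · simpa [hβA, hβB] using hAB i' j
    · simpa [hβB] using hBdisj (fun h => hmn (by rw [h]))
  · obtain ⟨i, j, rfl, rfl⟩ | ⟨i, j, rfl, rfl⟩ : (∃ i j : Fin 3, m = i ∧ n = j + 3) ∨
        (∃ i j : Fin 3, n = i ∧ m = j + 3) := by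
      rcases hmn with h | h
      · exact .inl ⟨⟨m, h.1⟩, ⟨n - 3, by omega⟩, rfl, by simp; omega⟩
      · exact .inr ⟨⟨n, h.1⟩, ⟨m - 3, by omega⟩, rfl, by simp; omega⟩
    · obtain ⟨y, hy, hadj⟩ := hadj i j
      exact ⟨A i, by simp [hβA], y, by simpa [hβB] using hy, hadj⟩
    · obtain ⟨y, hy, hadj⟩ := hadj i j
      exact ⟨y, by simpa [hβB] using hy, A i, by simp [hβA], hadj.symm⟩

namespace ThreeConnected

variable {G : FGraph}

theorem finite_verts (hG : ThreeConnected G) : G.verts.Finite :=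
  Set.finite_of_ncard_pos (by have := hG.1; omega)

theorem exists_adj_of_mem (hG : ThreeConnected G) {S : Set ℕ} (hSfin : S.Finite)
    (hS : S.ncard ≤ 3) {t : ℕ} (htS : t ∈ S) (htG : t ∈ G.verts)
    (C : (G.deleteVerts S).coe.ConnectedComponent) : ∃ x ∈ C.supp, G.Adj x t := by
  refine Subgraph.exists_adj_of_connected_deleteVerts_diff htS htG ?_ C
  have hcard : (hSfin.toFinset.erase t).card ≤ 2 := by
    rw [Finset.card_erase_of_mem (by simpa using htS), ← Set.ncard_eq_toFinset_card S hSfin]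
    omega
  simpa using hG.2 _ hcard

theorem not_injective_connectedComponent_of_planar (hG : ThreeConnected G) (hGp : Planar G)
    {A : Fin 3 → ℕ} (hA : Injective A) (hAG : ∀ i, A i ∈ G.verts)
    (C : Fin 3 → (G.deleteVerts (Set.range A)).coe.ConnectedComponent) :
    ¬ Injective C := by
  intro hC
  have hBG (j : Fin 3) : Subtype.val '' (C j).supp ⊆ G.verts := by
    rintro _ ⟨x, -, rfl⟩
    exact x.2.1
  refine hGp.2 (isMinor_K33g_of_branchSets G A hA hAG (fun j => Subtype.val '' (C j).supp)
    hBG (fun j => hG.finite_verts.subset (hBG j))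
    (fun j => Subgraph.connected_induce_image_supp Subgraph.deleteVerts_le (C j))
    (fun i j hij => ?_) (fun i j => ?_) (fun i j => ?_))
  · exact (Set.disjoint_image_iff Subtype.val_injective).mpr
      (pairwise_disjoint_supp_connectedComponent _ (hC.ne hij))
  · rintro ⟨x, -, hx⟩
    exact x.2.2 (hx ▸ ⟨i, rfl⟩)
  · obtain ⟨x, hx, hadj⟩ := hG.exists_adj_of_mem (Set.finite_range A)
      (by simp [Set.ncard_range_of_injective hA]) ⟨i, rfl⟩ (hAG i) (C j)
    exact ⟨x, ⟨x, hx, rfl⟩, hadj.symm⟩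

end ThreeConnected

theorem exactly_two_components_general (G : FGraph) (hG3 : ThreeConnected G) (hGp : Planar G)
    (a b c u : ℕ) (hab : a ≠ b) (hac : a ≠ c) (hbc : b ≠ c)
    (ha : a ∈ G.verts) (hb : b ∈ G.verts) (hc : c ∈ G.verts) (hu : u ∈ G.verts)
    (hua : u ≠ a) (hub : u ≠ b) (huc : u ≠ c)
    (hcut : ¬ (G.deleteVerts {a, b, c}).Connected) :
    Nat.card (G.deleteVerts {a, b, c}).coe.ConnectedComponent = 2 := by
  have hrange : Set.range ![a, b, c] = {a, b, c} := by ext; simp [or_comm, or_left_comm]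
  rw [← hrange] at hcut ⊢
  have : Nonempty (G.deleteVerts (Set.range ![a, b, c])).verts :=
    ⟨u, hu, by simp [hua, hub, huc]⟩
  obtain ⟨x, y, hxy⟩ := exists_connectedComponent_ne_of_not_connected
    (mt Subgraph.connected_iff'.mpr hcut)
  refine Nat.card_eq_two_iff.mpr ⟨x, y, hxy, Set.eq_univ_of_forall fun z => ?_⟩
  by_contra hz
  simp only [Set.mem_insert_iff, Set.mem_singleton_iff, not_or] at hz
  refine hG3.not_injective_connectedComponent_of_planar hGp
    (Matrix.injective_vecCons_three hab hac hbc) (fun i => ?_) ![x, y, z]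
    (Matrix.injective_vecCons_three hxy (Ne.symm hz.1) (Ne.symm hz.2))
  fin_cases i <;> assumption

theorem exactly_two_components (G : FGraph) (hG3 : ThreeConnected G) (hGp : Planar G)
    (a b c u : ℕ) (hab : a ≠ b) (hac : a ≠ c) (hbc : b ≠ c)
    (ha : a ∈ G.verts) (hb : b ∈ G.verts) (hc : c ∈ G.verts) (hu : u ∈ G.verts)
    (hua : u ≠ a) (hub : u ≠ b) (huc : u ≠ c)
    (hnbr : G.neighborSet u ⊆ {a, b, c})
    (hcut : ¬ (G.deleteVerts {a, b, c}).Connected) :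
    Nat.card (G.deleteVerts {a, b, c}).coe.ConnectedComponent = 2 :=
  exactly_two_components_general G hG3 hGp a b c u hab hac hbc ha hb hc hu hua hub huc hcut
end
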